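/- A blow-up of K_4^3 contains no induced copy of the complement of F_{3,2}. Here the complement of F_{3,2} is the 3-graph on {1,2,3,4,5} whose edges are the 6 triples not in F_{3,2}. -/
import Mathlib


open Finset

/-- The 3-graph `F_{3,2}` on 5 vertices with edges 123, 145, 245, 345. -/
def F32 : Finset (Finset (Fin 5)) := {{0, 1, 2}, {0, 3, 4}, {1, 3, 4}, {2, 3, 4}}

/-- The complement of `F_{3,2}`: the 6 triples on 5 vertices not in `F_{3,2}`. -/
def F32bar : Finset (Finset (Fin 5)) :=
  (Finset.powersetCard 3 (Finset.univ : Finset (Fin 5))) \ F32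

/-- rainbow predicate -/
def Rb (q : Fin 5 → Fin 4) (a b c : Fin 5) : Prop :=
  q a ≠ q b ∧ q a ≠ q c ∧ q b ≠ q c

instance : ∀ q a b c, Decidable (Rb q a b c) := fun _ _ _ _ => by unfold Rb; infer_instance

set_option synthInstance.maxSize 2000 in
set_option synthInstance.maxHeartbeats 1000000 in
set_option maxHeartbeats 1000000 in
set_option maxRecDepth 10000 in
lemma aux8' : ∀ a b c d e : Fin 4,
    ¬ ((a ≠ b ∧ a ≠ d ∧ b ≠ d) ∧ (a ≠ b ∧ a ≠ e ∧ b ≠ e) ∧ (a ≠ c ∧ a ≠ d ∧ c ≠ d) ∧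
       (a ≠ c ∧ a ≠ e ∧ c ≠ e) ∧ (b ≠ c ∧ b ≠ d ∧ c ≠ d) ∧ (b ≠ c ∧ b ≠ e ∧ c ≠ e) ∧
       ¬ (a ≠ b ∧ a ≠ c ∧ b ≠ c) ∧ ¬ (a ≠ d ∧ a ≠ e ∧ d ≠ e) ∧
       ¬ (b ≠ d ∧ b ≠ e ∧ d ≠ e) ∧ ¬ (c ≠ d ∧ c ≠ e ∧ d ≠ e)) := by
  decide

lemma aux8 : ∀ q : Fin 5 → Fin 4,
    ¬ (Rb q 0 1 3 ∧ Rb q 0 1 4 ∧ Rb q 0 2 3 ∧ Rb q 0 2 4 ∧ Rb q 1 2 3 ∧ Rb q 1 2 4 ∧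
       ¬ Rb q 0 1 2 ∧ ¬ Rb q 0 3 4 ∧ ¬ Rb q 1 3 4 ∧ ¬ Rb q 2 3 4) := by
  intro q
  exact aux8' (q 0) (q 1) (q 2) (q 3) (q 4)

lemma card3 : ∀ x y z : Fin 4, ({x, y, z} : Finset (Fin 4)).card = 3 ↔ (x ≠ y ∧ x ≠ z ∧ y ≠ z) := by
  decide

/-- A blow-up of `K_4^3` contains no induced copy of the complement of `F_{3,2}`. -/
theorem stmt8 {V : Type*} [DecidableEq V] (p : V → Fin 4)
    (H : Finset (Finset V))
    (hH : ∀ e, e ∈ H ↔ e.card = 3 ∧ (e.image p).card = 3) :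
    ¬ ∃ φ : Fin 5 → V, Function.Injective φ ∧
        ∀ e : Finset (Fin 5), e.card = 3 → (e ∈ F32bar ↔ e.image φ ∈ H) := by
  rintro ⟨φ, hinj, hφ⟩
  set q : Fin 5 → Fin 4 := p ∘ φ with hqdef
  have hq : ∀ a b c : Fin 5, ({a, b, c} : Finset (Fin 5)).card = 3 →
      ((({a, b, c} : Finset (Fin 5)) ∈ F32bar) ↔ Rb q a b c) := by
    intro a b c h
    rw [hφ _ h, hH]
    rw [Finset.card_image_of_injective _ hinj, h]
    simp only [Finset.image_image, Finset.image_insert, Finset.image_singleton,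
      Function.comp_apply, true_and]
    exact card3 (q a) (q b) (q c)
  apply aux8 q
  refine ⟨?_, ?_, ?_, ?_, ?_, ?_, ?_, ?_, ?_, ?_⟩
  · exact (hq 0 1 3 (by decide)).mp (by decide)
  · exact (hq 0 1 4 (by decide)).mp (by decide)
  · exact (hq 0 2 3 (by decide)).mp (by decide)
  · exact (hq 0 2 4 (by decide)).mp (by decide)
  · exact (hq 1 2 3 (by decide)).mp (by decide)
  · exact (hq 1 2 4 (by decide)).mp (by decide)
  · exact fun hr => (by decide : ¬ (({0,1,2} : Finset (Fin 5)) ∈ F32bar)) ((hq 0 1 2 (by decide)).mpr hr)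
  · exact fun hr => (by decide : ¬ (({0,3,4} : Finset (Fin 5)) ∈ F32bar)) ((hq 0 3 4 (by decide)).mpr hr)
  · exact fun hr => (by decide : ¬ (({1,3,4} : Finset (Fin 5)) ∈ F32bar)) ((hq 1 3 4 (by decide)).mpr hr)
  · exact fun hr => (by decide : ¬ (({2,3,4} : Finset (Fin 5)) ∈ F32bar)) ((hq 2 3 4 (by decide)).mpr hr)
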